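/- Let k' be a field with a non-Archimedean absolute value |·|_v whose valuation ring O = {x ∈ k' : |x|_v ≤ 1} is a Dedekind domain. Let (c_n)_{n ∈ ℤ} be a sequence in k' satisfying a linear recurrence c_n = r_1 c_{n−1} + ⋯ + r_M c_{n−M} of minimal order M with r_i ∈ k' and r_M ≠ 0. If |c_n|_v ≤ 1 for every n ≥ n_0, then |r_i|_v ≤ 1 for all i = 1, …, M. -/

import Mathlib

/-!
Let `q = 1 - r₁X - ⋯ - r_M X^M`. The coefficients of `q⁻¹` satisfy the recurrence from index `M`
on, and since the Hankel matrix of `c` at `n₀` is invertible, they are a linear combination of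
the shifted sequences `n ↦ c (n₀ + n + j)`, `j < M`; hence they are bounded.

If some `|r_i| > 1`, put `ρ = max |r_i|^(1/i) > 1` and weigh the `n`-th coefficient by `ρ⁻ⁿ`.
Then `|q_i| ≤ ρ^i` and, inductively, `|(q⁻¹)_n| ≤ ρⁿ`, with equality at `i = 0` and `n = 0`.
Let `D` be the last index with `|q_D| = ρ^D` (so `D ≥ 1`) and `N` the last one with
`|(q⁻¹)_N| = ρ^N`, which exists because `q⁻¹` is bounded. In the coefficient of `X^(D + N)` in
`q * q⁻¹` every term but `q_D (q⁻¹)_N` is strictly smaller than `ρ^(D + N)`, so by the strong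
triangle inequality it is nonzero, contradicting `q * q⁻¹ = 1`.
-/

open Finset PowerSeries
open scoped Matrix

theorem Nat.exists_last_eq_of_le {α : Type*} [PartialOrder α] {f g : ℕ → α}
    (hle : ∀ n, f n ≤ g n) {n₁ N : ℕ} (h₁ : f n₁ = g n₁) (hN : ∀ n, N ≤ n → f n < g n) :
    ∃ n, n₁ ≤ n ∧ f n = g n ∧ ∀ m, n < m → f m < g m := by
  classical
  have hn₁N : n₁ ≤ N := not_lt.mp fun h => (hN n₁ h.le).ne h₁
  refine ⟨Nat.findGreatest (fun n => f n = g n) N, Nat.le_findGreatest hn₁N h₁,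
    Nat.findGreatest_spec (P := fun n => f n = g n) hn₁N h₁, fun m hm => ?_⟩
  rcases le_or_gt N m with hNm | hmN
  · exact hN m hNm
  · exact (hle m).lt_of_ne (Nat.findGreatest_is_greatest hm hmN.le)

theorem exists_one_lt_pow_bound {f : ℕ → ℝ} (hf : ∀ i, 0 ≤ f i) {M i₁ : ℕ}
    (hi₁ : i₁ ∈ Icc 1 M) (h₁ : 1 < f i₁) :
    ∃ ρ : ℝ, 1 < ρ ∧ (∀ i ∈ Icc 1 M, f i ≤ ρ ^ i) ∧ ∃ i ∈ Icc 1 M, f i = ρ ^ i := by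
  have hroot : ∀ i ∈ Icc 1 M, (f i ^ (i : ℝ)⁻¹) ^ i = f i := fun i hi =>
    Real.rpow_inv_natCast_pow (hf i) (by grind)
  obtain ⟨i₀, hi₀, hρ⟩ := exists_mem_eq_sup' ⟨i₁, hi₁⟩ fun i => f i ^ (i : ℝ)⁻¹
  have hle : ∀ i ∈ Icc 1 M, f i ^ (i : ℝ)⁻¹ ≤ f i₀ ^ (i₀ : ℝ)⁻¹ := fun i hi =>
    hρ ▸ le_sup' (fun i => f i ^ (i : ℝ)⁻¹) hi
  refine ⟨f i₀ ^ (i₀ : ℝ)⁻¹, ?_, fun i hi => ?_, i₀, hi₀, (hroot i₀ hi₀).symm⟩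
  · have : (0 : ℝ) < i₁ := by exact_mod_cast (mem_Icc.mp hi₁).1
    exact (Real.one_lt_rpow h₁ (inv_pos.mpr this)).trans_le (hle i₁ hi₁)
  · rw [← hroot i hi]
    exact pow_le_pow_left₀ (Real.rpow_nonneg (hf i) _) (hle i hi) i

namespace LinearRecurrence

variable {R : Type*} [CommRing R] {E : LinearRecurrence R}

theorem IsSolution.shift {u : ℕ → R} (hu : E.IsSolution u) (j : ℕ) :
    E.IsSolution fun n => u (n + j) := by
  intro n
  simp only [add_right_comm n E.order j, hu (n + j), add_right_comm n _ j]

theorem exists_eq_sum_shift {u w : ℕ → R} (hu : E.IsSolution u) (hw : E.IsSolution w)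
    (hH : IsUnit (Matrix.of fun i j : Fin E.order => u (i + j)).det) :
    ∃ l : Fin E.order → R, w = fun n => ∑ j, l j * u (n + j) := by
  set H := Matrix.of fun i j : Fin E.order => u (i + j)
  refine ⟨H⁻¹ *ᵥ fun i => w i, (E.eq_iff_eqOn_range_order _ _ hw ?_).mpr fun n hn => ?_⟩
  · have : (fun n => ∑ j, (H⁻¹ *ᵥ fun i => w i) j * u (n + j)) =
        ∑ j, (H⁻¹ *ᵥ fun i => w i) j • fun n => u (n + j) := by
      ext n; simp
    rw [this]
    exact E.solSpace.sum_mem fun j _ => E.solSpace.smul_mem _ (hu.shift j)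
  · have hn : n < E.order := mem_range.mp hn
    have := congrFun (Matrix.mulVec_mulVec (fun i : Fin E.order => w i) H H⁻¹) ⟨n, hn⟩
    rw [Matrix.mul_nonsing_inv H hH, Matrix.one_mulVec] at this
    simp [← this, Matrix.mulVec, dotProduct, H, mul_comm]

end LinearRecurrence

section

variable {R : Type*} [CommRing R]

def lagRecurrence (M : ℕ) (r : ℕ → R) : LinearRecurrence R := ⟨M, fun i => r (M - i)⟩

theorem lagRecurrence_isSolution_iff {M : ℕ} {r : ℕ → R} {u : ℕ → R} :
    (lagRecurrence M r).IsSolution u ↔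
      ∀ n, u (n + M) = ∑ i ∈ range M, r (i + 1) * u (n + M - (i + 1)) := by
  refine forall_congr' fun n => ?_
  change u (n + M) = ∑ i : Fin M, r (M - i) * u (n + i) ↔ _
  rw [Fin.sum_univ_eq_sum_range (fun i => r (M - i) * u (n + i)),
    ← sum_range_reflect (fun i => r (M - i) * u (n + i))]
  refine Eq.congr_right (sum_congr rfl fun i hi => ?_)
  have := mem_range.mp hi
  congr 2 <;> omega

noncomputable def recurrenceDenom (M : ℕ) (r : ℕ → R) : R⟦X⟧ :=
  1 - ∑ i ∈ range M, C (r (i + 1)) * X ^ (i + 1)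

theorem coeff_recurrenceDenom_mul {M : ℕ} {r : ℕ → R} (g : R⟦X⟧) {n : ℕ} (hn : M ≤ n) :
    coeff n (recurrenceDenom M r * g) =
      coeff n g - ∑ i ∈ range M, r (i + 1) * coeff (n - (i + 1)) g := by
  simp only [recurrenceDenom, sub_mul, one_mul, sum_mul, map_sub, map_sum, mul_assoc, coeff_C_mul,
    coeff_X_pow_mul']
  refine congrArg _ (sum_congr rfl fun i hi => ?_)
  rw [if_pos (by grind)]

theorem coeff_recurrenceDenom_of_ne_zero {M : ℕ} {r : ℕ → R} {n : ℕ} (hn : n ≠ 0) :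
    coeff n (recurrenceDenom M r) = -if n ≤ M then r n else 0 := by
  obtain ⟨k, rfl⟩ := Nat.exists_eq_succ_of_ne_zero hn
  simp [recurrenceDenom, coeff_one]

theorem coeff_recurrenceDenom_of_lt {M : ℕ} {r : ℕ → R} {n : ℕ} (hn : M < n) :
    coeff n (recurrenceDenom M r) = 0 := by
  rw [coeff_recurrenceDenom_of_ne_zero (by omega), if_neg (by omega), neg_zero]

theorem constantCoeff_recurrenceDenom {M : ℕ} {r : ℕ → R} :
    constantCoeff (recurrenceDenom M r) = 1 := by
  simp [recurrenceDenom]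

theorem lagRecurrence_isSolution_shift {M : ℕ} {r : ℕ → R} {c : ℤ → R}
    (hrec : ∀ n : ℤ, c n = ∑ i ∈ range M, r (i + 1) * c (n - (i + 1))) (t : ℤ) :
    (lagRecurrence M r).IsSolution fun n => c (t + n) := by
  refine lagRecurrence_isSolution_iff.mpr fun n => ?_
  rw [hrec]
  refine sum_congr rfl fun i hi => ?_
  have : i + 1 ≤ n + M := by grind
  push_cast [Nat.cast_sub this]
  ring_nf

end

section

variable {K : Type*} [Field K] {v : AbsoluteValue K ℝ}

theorem PowerSeries.apply_coeff_add_mul_eq_pow (hna : IsNonarchimedean v) {ρ : ℝ} (hρ : 0 < ρ)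
    {f g : K⟦X⟧} {i j : ℕ}
    (hf : ∀ k, v (coeff k f) ≤ ρ ^ k) (hfi : v (coeff i f) = ρ ^ i)
    (hfi' : ∀ k, i < k → v (coeff k f) < ρ ^ k)
    (hg : ∀ k, v (coeff k g) ≤ ρ ^ k) (hgj : v (coeff j g) = ρ ^ j)
    (hgj' : ∀ k, j < k → v (coeff k g) < ρ ^ k) :
    v (coeff (i + j) (f * g)) = ρ ^ (i + j) := by
  have hij : v (coeff i f * coeff j g) = ρ ^ (i + j) := by rw [map_mul, hfi, hgj, pow_add]
  rw [coeff_mul, hna.apply_sum_eq_of_lt (fun a => (v.map_neg a).symm) (k := (i, j))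
    (mem_antidiagonal.mpr rfl) fun p hp hne => ?_, hij]
  obtain ⟨k, l⟩ := p
  have hkl : k + l = i + j := mem_antidiagonal.mp hp
  rw [hij, map_mul, ← hkl, pow_add]
  rcases lt_or_ge i k with hik | hki
  · exact mul_lt_mul_of_lt_of_le_of_nonneg_of_pos (hfi' k hik) (hg l) (v.nonneg _) (by positivity)
  · have hjl : j < l := by grind
    exact mul_lt_mul_of_le_of_lt_of_nonneg_of_pos (hf k) (hgj' l hjl) (v.nonneg _) (by positivity)

theorem PowerSeries.apply_coeff_inv_le_pow (hna : IsNonarchimedean v) {ρ : ℝ} (hρ : 0 ≤ ρ)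
    {q : K⟦X⟧} (hq₀ : constantCoeff q = 1) (hq : ∀ k, v (coeff k q) ≤ ρ ^ k) (n : ℕ) :
    v (coeff n q⁻¹) ≤ ρ ^ n := by
  induction n using Nat.strong_induction_on with
  | _ n ih =>
  rw [coeff_inv, hq₀]
  split_ifs with hn
  · simp [hn]
  rw [inv_one, neg_one_mul, v.map_neg]
  refine (hna.apply_sum_le_sup ⟨(0, n), mem_antidiagonal.mpr (zero_add n)⟩).trans
    (sup'_le _ _ fun p hp => ?_)
  have hsum : p.1 + p.2 = n := mem_antidiagonal.mp hp
  split_ifs with hlt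
  · rw [map_mul, ← hsum, pow_add]
    exact mul_le_mul (hq _) (ih _ hlt) (v.nonneg _) (by positivity)
  · simp only [map_zero]; positivity

theorem PowerSeries.apply_coeff_le_one_of_bounded_inv (hna : IsNonarchimedean v) {q : K⟦X⟧}
    (hq₀ : constantCoeff q = 1) {M : ℕ} (hqM : ∀ i, M < i → coeff i q = 0) {C : ℝ}
    (hC : ∀ n, v (coeff n q⁻¹) ≤ C) (i : ℕ) : v (coeff i q) ≤ 1 := by
  by_contra! hi
  have hiM : i ∈ Icc 1 M := by
    refine mem_Icc.mpr ⟨Nat.one_le_iff_ne_zero.mpr fun h => ?_, not_lt.mp fun h => ?_⟩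
    · rw [h, coeff_zero_eq_constantCoeff_apply, hq₀, map_one] at hi; exact hi.false
    · rw [hqM i h, map_zero] at hi; linarith
  obtain ⟨ρ, hρ, hρq, i₀, hi₀, hqi₀⟩ :=
    exists_one_lt_pow_bound (f := fun k => v (coeff k q)) (fun k => v.nonneg _) hiM hi
  have hq : ∀ k, v (coeff k q) ≤ ρ ^ k := by
    intro k
    rcases Nat.eq_zero_or_pos k with rfl | hk
    · simp [hq₀]
    rcases le_or_gt k M with hkM | hkM
    · exact hρq k (mem_Icc.mpr ⟨hk, hkM⟩)
    · rw [hqM k hkM, map_zero]; positivity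
  have hg := apply_coeff_inv_le_pow hna (by positivity) hq₀ hq
  obtain ⟨D, hi₀D, hqD, hqD'⟩ := Nat.exists_last_eq_of_le hq hqi₀ (N := M + 1) fun k hk => by
    rw [hqM k (by omega), map_zero]; positivity
  obtain ⟨N, hN⟩ := pow_unbounded_of_one_lt C hρ
  obtain ⟨n, -, hgn, hgn'⟩ := Nat.exists_last_eq_of_le hg (n₁ := 0) (N := N)
    (by simp [hq₀]) fun k hk => (hC k).trans_lt (hN.trans_le (pow_le_pow_right₀ hρ.le hk))
  have := apply_coeff_add_mul_eq_pow hna (by positivity) hq hqD hqD' hg hgn hgn'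
  rw [PowerSeries.mul_inv_cancel q (by simp [hq₀]), coeff_one,
    if_neg (by grind), map_zero] at this
  exact (pow_pos (by positivity) _).ne this

theorem lagRecurrence_isSolution_coeff_inv {M : ℕ} (hM : 0 < M) (r : ℕ → K) :
    (lagRecurrence M r).IsSolution fun n => coeff n (recurrenceDenom M r)⁻¹ := by
  refine lagRecurrence_isSolution_iff.mpr fun n => ?_
  have h := coeff_recurrenceDenom_mul (r := r) (recurrenceDenom M r)⁻¹ (Nat.le_add_left M n)
  rw [PowerSeries.mul_inv_cancel _ (by simp [constantCoeff_recurrenceDenom]), coeff_one,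
    if_neg (by omega)] at h
  exact sub_eq_zero.mp h.symm

end

theorem recurrence_coeffs_in_valuation_ring
    (k' : Type*) [Field k'] (v : AbsoluteValue k' ℝ)
    (hna : IsNonarchimedean v)
    (M : ℕ) (r : ℕ → k')
    (c : ℤ → k')
    (hrec : ∀ n : ℤ, c n = ∑ i ∈ Finset.range M, r (i + 1) * c (n - (i + 1)))
    (hmin : ∀ n : ℤ, (Matrix.of fun i j : Fin M => c (n + i + j)).det ≠ 0)
    (n₀ : ℤ) (hc : ∀ n : ℤ, n₀ ≤ n → v (c n) ≤ 1) :
    ∀ i ∈ Finset.Icc 1 M, v (r i) ≤ 1 := by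
  intro i hi
  have hM : 0 < M := by grind
  have hH : IsUnit (Matrix.of fun i j : Fin M => c (n₀ + ((i + j : ℕ) : ℤ))).det := by
    simpa [add_assoc] using (hmin n₀).isUnit
  obtain ⟨l, hl⟩ := LinearRecurrence.exists_eq_sum_shift (lagRecurrence_isSolution_shift hrec n₀)
    (lagRecurrence_isSolution_coeff_inv hM r) hH
  have hbdd : ∀ n, v (coeff n (recurrenceDenom M r)⁻¹) ≤ ∑ j, v (l j) := by
    intro n
    rw [congrFun hl n]
    refine (v.sum_le _ _).trans (sum_le_sum fun j _ => ?_)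
    rw [map_mul]
    exact mul_le_of_le_one_right (v.nonneg _) (hc _ (by omega))
  have := apply_coeff_le_one_of_bounded_inv hna constantCoeff_recurrenceDenom
    (fun _ => coeff_recurrenceDenom_of_lt) hbdd i
  rwa [coeff_recurrenceDenom_of_ne_zero (by grind), if_pos (by grind), v.map_neg] at this
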